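/- Any minimizing sequence is uniformly bounded in L²: if ω ∈ K_μ then ‖ω‖₂² ≤ C(‖x₂ω‖₁^{2/3}‖ω‖₁^{4/3} − E₂[ω]); consequently, for a sequence {ω_n} with ω_n ∈ K_{μ_n}, μ_n → μ, and −E₂[ω_n] → I_μ < 0, one has limsup_n ‖ω_n‖₂ ≤ C μ^{1/3}. -/

import Mathlib

open Real MeasureTheory

def upperHalf : Set (ℝ × ℝ) := {p | 0 < p.2}

noncomputable def sqdist (x y : ℝ × ℝ) : ℝ := (x.1 - y.1) ^ 2 + (x.2 - y.2) ^ 2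

noncomputable def halfPlaneGreen (x y : ℝ × ℝ) : ℝ :=
  (1 / (4 * π)) * Real.log (1 + 4 * x.2 * y.2 / sqdist x y)


noncomputable def kineticEnergy (ω : ℝ × ℝ → ℝ) : ℝ :=
  (1 / 2) * ∫ x in upperHalf, ∫ y in upperHalf, halfPlaneGreen x y * ω x * ω y

/-- The penalized energy `E₂[ω] = E[ω] − (1/2) ∫ ω²`. -/
noncomputable def E₂ (ω : ℝ × ℝ → ℝ) : ℝ :=
  kineticEnergy ω - (1 / 2) * ∫ p in upperHalf, (ω p) ^ 2

/-- Membership in the admissible class `K_μ`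
(nonnegative, with the natural integrability, impulse `μ` and mass at most `1`). -/
def memK (μ : ℝ) (ω : ℝ × ℝ → ℝ) : Prop :=
  (∀ p, 0 ≤ ω p) ∧
  MeasureTheory.Integrable ω (MeasureTheory.volume.restrict upperHalf) ∧
  MeasureTheory.MemLp ω 2 (MeasureTheory.volume.restrict upperHalf) ∧
  MeasureTheory.Integrable (fun p => p.2 * ω p) (MeasureTheory.volume.restrict upperHalf) ∧
  (∫ p in upperHalf, p.2 * ω p) = μ ∧
  (∫ p in upperHalf, ω p) ≤ 1

def negEnergyValues (μ : ℝ) : Set ℝ := {r | ∃ ω : ℝ × ℝ → ℝ, memK μ ω ∧ r = -E₂ ω}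

/-!
Split the Green function at a scale `ρ`. Since `log (1 + t) ≤ 2 √t`, the far field contributes at
most `√(x₂ y₂) / (π ρ)`, while the near field `log⁺ (ρ² / |x - y|²)` is at most
`4 √ρ |x₁ - y₁|^{-1/4} |x₂ - y₂|^{-1/4}` on the square of side `2ρ` and vanishes outside it. This
product kernel has `L²` norm `4 √ρ` by Fubini, so Cauchy–Schwarz gives
`E[ω] ≤ (‖√x₂ ω‖₁² / ρ + 4 ρ ‖ω‖₂ ‖ω‖₁) / (2π)`, and `‖√x₂ ω‖₁² ≤ ‖x₂ ω‖₁ ‖ω‖₁`.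
The choice `ρ = (‖x₂ ω‖₁ / ‖ω‖₁)^{1/3} / 2` yields `E[ω] ≤ ‖x₂ ω‖₁^{2/3} ‖ω‖₁^{4/3} + ‖ω‖₂² / 4`,
which is the first claim with `C = 4`. Along a minimizing sequence eventually `E₂[ω_n] > 0`, and
`‖ω_n‖₁ ≤ 1`, so `‖ω_n‖₂ ≤ 2 μ_n^{1/3}`.
-/

open Set Filter Topology

lemma Real.log_one_add_le_two_sqrt {t : ℝ} (ht : 0 ≤ t) : log (1 + t) ≤ 2 * √t := by
  have h : log √(1 + t) ≤ √(1 + t) - 1 := log_le_sub_one_of_pos (by positivity)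
  have h' : √(1 + t) ≤ 1 + √t := by
    rw [sqrt_le_left (by positivity)]
    nlinarith [sq_sqrt ht, sqrt_nonneg t]
  rw [log_sqrt (by positivity)] at h
  linarith

lemma Real.log_one_add_div_le_add_posLog {c D ρ : ℝ} (hc : 0 ≤ c) (hD : 0 < D)
    (hρ : 0 < ρ) : log (1 + c / D) ≤ log (1 + c / ρ ^ 2) + log⁺ (ρ ^ 2 / D) := by
  rcases le_or_gt (ρ ^ 2) D with hle | hlt
  · have : log (1 + c / D) ≤ log (1 + c / ρ ^ 2) :=
      log_le_log (by positivity) (by gcongr)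
    linarith [posLog_nonneg (x := ρ ^ 2 / D)]
  · have hsplit : ρ ^ 2 / D * (1 + c / ρ ^ 2) = ρ ^ 2 / D + c / D := by field_simp
    have hone : 1 ≤ ρ ^ 2 / D := (one_le_div hD).mpr hlt.le
    calc log (1 + c / D) ≤ log (ρ ^ 2 / D * (1 + c / ρ ^ 2)) :=
          log_le_log (by positivity) (by rw [hsplit]; linarith)
      _ = log (ρ ^ 2 / D) + log (1 + c / ρ ^ 2) := log_mul (by positivity) (by positivity)
      _ ≤ log (1 + c / ρ ^ 2) + log⁺ (ρ ^ 2 / D) := by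
          rw [add_comm]; gcongr; exact le_max_right _ _

lemma integral_mul_le_sqrt_integral_sq_mul_sqrt_integral_sq {α : Type*} [MeasurableSpace α]
    {μ : Measure α} {f g : α → ℝ} (hf0 : 0 ≤ᵐ[μ] f) (hg0 : 0 ≤ᵐ[μ] g)
    (hf : MemLp f 2 μ) (hg : MemLp g 2 μ) :
    ∫ a, f a * g a ∂μ ≤ √(∫ a, f a ^ 2 ∂μ) * √(∫ a, g a ^ 2 ∂μ) := by
  have h := integral_mul_le_Lp_mul_Lq_of_nonneg HolderConjugate.two_two hf0 hg0
    (by rwa [ENNReal.ofReal_ofNat]) (by rwa [ENNReal.ofReal_ofNat])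
  simpa only [rpow_two, ← sqrt_eq_rpow] using h

lemma memLp_two_sqrt {α : Type*} [MeasurableSpace α] {μ : Measure α} {h : α → ℝ}
    (h0 : 0 ≤ᵐ[μ] h) (hh : Integrable h μ) : MemLp (fun a => √(h a)) 2 μ :=
  (memLp_two_iff_integrable_sq (continuous_sqrt.comp_aestronglyMeasurable hh.1)).2 <|
    hh.congr <| by filter_upwards [h0] with a ha using (sq_sqrt ha).symm

noncomputable def cutoffRpow (ρ r : ℝ) : ℝ → ℝ := (Iio ρ).indicator (· ^ r)

lemma cutoffRpow_nonneg (ρ r : ℝ) {s : ℝ} (hs : 0 ≤ s) : 0 ≤ cutoffRpow ρ r s :=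
  indicator_nonneg (fun _ _ => rpow_nonneg hs _) s

lemma cutoffRpow_sq (ρ r : ℝ) {s : ℝ} (hs : 0 ≤ s) :
    cutoffRpow ρ r s ^ 2 = cutoffRpow ρ (2 * r) s := by
  unfold cutoffRpow
  by_cases h : s ∈ Iio ρ
  · simp only [indicator_of_mem h]
    rw [← rpow_natCast, ← rpow_mul hs]; ring_nf
  · simp [indicator_of_notMem h]

lemma integral_cutoffRpow_abs {ρ r : ℝ} (hρ : 0 < ρ) (hr : -1 < r) :
    ∫ x, cutoffRpow ρ r |x| = 2 * (ρ ^ (r + 1) / (r + 1)) := by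
  rw [integral_comp_abs, cutoffRpow, setIntegral_indicator measurableSet_Iio, Ioi_inter_Iio,
    ← integral_Ioc_eq_integral_Ioo, ← intervalIntegral.integral_of_le hρ.le,
    integral_rpow (Or.inl hr), zero_rpow (by linarith), sub_zero]

lemma integrable_cutoffRpow_abs {ρ r : ℝ} (hρ : 0 < ρ) (hr : -1 < r) :
    Integrable (fun x => cutoffRpow ρ r |x|) :=
  Integrable.of_integral_ne_zero <| by
    rw [integral_cutoffRpow_abs hρ hr]
    have : 0 < r + 1 := by linarith
    positivity

noncomputable def nearKernel (ρ : ℝ) (z : ℝ × ℝ) : ℝ :=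
  cutoffRpow ρ (-(1 / 4)) |z.1| * cutoffRpow ρ (-(1 / 4)) |z.2|

lemma nearKernel_nonneg (ρ : ℝ) (z : ℝ × ℝ) : 0 ≤ nearKernel ρ z :=
  mul_nonneg (cutoffRpow_nonneg _ _ (abs_nonneg _)) (cutoffRpow_nonneg _ _ (abs_nonneg _))

lemma nearKernel_sq (ρ : ℝ) (z : ℝ × ℝ) :
    nearKernel ρ z ^ 2 = cutoffRpow ρ (-(1 / 2)) |z.1| * cutoffRpow ρ (-(1 / 2)) |z.2| := by
  rw [nearKernel, mul_pow, cutoffRpow_sq _ _ (abs_nonneg _), cutoffRpow_sq _ _ (abs_nonneg _)]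
  norm_num

lemma measurable_nearKernel (ρ : ℝ) : Measurable (nearKernel ρ) := by
  unfold nearKernel cutoffRpow
  fun_prop (disch := exact measurableSet_Iio)

lemma integrable_nearKernel_sq {ρ : ℝ} (hρ : 0 < ρ) :
    Integrable (fun z => nearKernel ρ z ^ 2) := by
  simp only [nearKernel_sq]
  rw [Measure.volume_eq_prod]
  exact (integrable_cutoffRpow_abs hρ (by norm_num)).mul_prod
    (integrable_cutoffRpow_abs hρ (by norm_num))

lemma integral_nearKernel_sq {ρ : ℝ} (hρ : 0 < ρ) : ∫ z, nearKernel ρ z ^ 2 = 16 * ρ := by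
  simp only [nearKernel_sq]
  rw [Measure.volume_eq_prod, integral_prod_mul (fun s => cutoffRpow ρ (-(1 / 2)) |s|)
    (fun s => cutoffRpow ρ (-(1 / 2)) |s|), integral_cutoffRpow_abs hρ (by norm_num)]
  norm_num [← sqrt_eq_rpow]
  nlinarith [sq_sqrt hρ.le]

lemma memLp_nearKernel_sub {ρ : ℝ} (hρ : 0 < ρ) (x : ℝ × ℝ) :
    MemLp (fun y => nearKernel ρ (y - x)) 2 :=
  (memLp_two_iff_integrable_sq
    ((measurable_nearKernel ρ).comp (measurable_id.sub_const x)).aestronglyMeasurable).2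
    ((integrable_nearKernel_sq hρ).comp_sub_right x)

lemma ae_fst_ne_and_snd_ne (x : ℝ × ℝ) :
    ∀ᵐ y : ℝ × ℝ, y.1 ≠ x.1 ∧ y.2 ≠ x.2 := by
  rw [Measure.volume_eq_prod]
  exact (Measure.quasiMeasurePreserving_fst.ae (Measure.ae_ne volume x.1)).and
    (Measure.quasiMeasurePreserving_snd.ae (Measure.ae_ne volume x.2))

lemma posLog_div_le_nearKernel {ρ : ℝ} (hρ : 0 < ρ) {z : ℝ × ℝ} (h1 : z.1 ≠ 0)
    (h2 : z.2 ≠ 0) :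
    log⁺ (ρ ^ 2 / (z.1 ^ 2 + z.2 ^ 2)) ≤ 4 * √ρ * nearKernel ρ z := by
  set D := z.1 ^ 2 + z.2 ^ 2
  have hu : 0 < |z.1| := abs_pos.mpr h1
  have hv : 0 < |z.2| := abs_pos.mpr h2
  rcases le_or_gt (ρ ^ 2) D with hle | hlt
  · rw [(posLog_eq_zero_iff _).mpr]
    · have := nearKernel_nonneg ρ z
      positivity
    · rw [abs_of_pos (by positivity)]
      exact div_le_one_of_le₀ hle (by positivity)
  · have hu_lt : |z.1| < ρ := by
      apply abs_lt_of_sq_lt_sq _ hρ.le; nlinarith [sq_nonneg z.2]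
    have hv_lt : |z.2| < ρ := by
      apply abs_lt_of_sq_lt_sq _ hρ.le; nlinarith [sq_nonneg z.1]
    have hprod : |z.1| * |z.2| ≤ D := by
      nlinarith [sq_nonneg (|z.1| - |z.2|), sq_abs z.1, sq_abs z.2]
    have hK : nearKernel ρ z = (|z.1| * |z.2|) ^ (-(1 / 4 : ℝ)) := by
      simp only [nearKernel, cutoffRpow, indicator_of_mem (mem_Iio.mpr hu_lt),
        indicator_of_mem (mem_Iio.mpr hv_lt), mul_rpow hu.le hv.le]
    have hmono : ρ ^ 2 / D ≤ ρ ^ 2 / (|z.1| * |z.2|) := by gcongr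
    calc log⁺ (ρ ^ 2 / D) ≤ log⁺ (ρ ^ 2 / (|z.1| * |z.2|)) :=
          posLog_le_posLog (by positivity) hmono
      _ ≤ (ρ ^ 2 / (|z.1| * |z.2|)) ^ (1 / 4 : ℝ) / (1 / 4) :=
          max_le (by positivity) (log_le_rpow_div (by positivity) (by norm_num))
      _ = 4 * √ρ * nearKernel ρ z := by
          rw [hK, div_rpow (by positivity) (by positivity), sqrt_eq_rpow, ← rpow_natCast,
            ← rpow_mul hρ.le, rpow_neg (by positivity)]
          norm_num; ring

lemma halfPlaneGreen_nonneg {x y : ℝ × ℝ} (hx : 0 ≤ x.2) (hy : 0 ≤ y.2) :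
    0 ≤ halfPlaneGreen x y := by
  unfold halfPlaneGreen sqdist
  have : 0 ≤ 4 * x.2 * y.2 / ((x.1 - y.1) ^ 2 + (x.2 - y.2) ^ 2) := by positivity
  exact mul_nonneg (by positivity) (log_nonneg (by linarith))

lemma halfPlaneGreen_le {x y : ℝ × ℝ} (hx : 0 ≤ x.2) (hy : 0 ≤ y.2) (h1 : y.1 ≠ x.1)
    (h2 : y.2 ≠ x.2) {ρ : ℝ} (hρ : 0 < ρ) :
    halfPlaneGreen x y ≤ (√x.2 * √y.2 / ρ + √ρ * nearKernel ρ (y - x)) / π := by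
  have h1' : (y - x).1 ≠ 0 := sub_ne_zero.mpr h1
  have hD : sqdist x y = (y - x).1 ^ 2 + (y - x).2 ^ 2 := by
    simp only [sqdist, Prod.fst_sub, Prod.snd_sub]; ring
  have hfar : log (1 + 4 * x.2 * y.2 / ρ ^ 2) ≤ 4 * (√x.2 * √y.2 / ρ) := by
    calc log (1 + 4 * x.2 * y.2 / ρ ^ 2) ≤ 2 * √(4 * x.2 * y.2 / ρ ^ 2) :=
          log_one_add_le_two_sqrt (by positivity)
      _ = 4 * (√x.2 * √y.2 / ρ) := by
          rw [sqrt_div' _ (sq_nonneg ρ), sqrt_sq hρ.le, sqrt_mul' _ hy, sqrt_mul' _ hx,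
            show (4 : ℝ) = 2 ^ 2 by norm_num, sqrt_sq zero_le_two]
          ring
  have hnear := posLog_div_le_nearKernel hρ h1' (sub_ne_zero.mpr h2)
  have hlog := log_one_add_div_le_add_posLog (c := 4 * x.2 * y.2)
    (by positivity) (by positivity : 0 < (y - x).1 ^ 2 + (y - x).2 ^ 2) hρ
  calc halfPlaneGreen x y = log (1 + 4 * x.2 * y.2 / sqdist x y) / (4 * π) := by
        rw [halfPlaneGreen]; ring
    _ ≤ (4 * (√x.2 * √y.2 / ρ) + 4 * √ρ * nearKernel ρ (y - x)) / (4 * π) := by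
        rw [hD]; gcongr; linarith
    _ = (√x.2 * √y.2 / ρ + √ρ * nearKernel ρ (y - x)) / π := by
        field_simp

lemma measurableSet_upperHalf : MeasurableSet upperHalf :=
  measurableSet_lt measurable_const measurable_snd

lemma sqrt_snd_mul_eq {ω : ℝ × ℝ → ℝ} (hω0 : ∀ p, 0 ≤ ω p) {y : ℝ × ℝ}
    (hy : y ∈ upperHalf) :
    √y.2 * ω y = √(y.2 * ω y) * √(ω y) := by
  rw [sqrt_mul (le_of_lt hy), mul_assoc, mul_self_sqrt (hω0 y)]

lemma ae_snd_mul_nonneg {ω : ℝ × ℝ → ℝ} (hω0 : ∀ p, 0 ≤ ω p) :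
    0 ≤ᵐ[volume.restrict upperHalf] fun p => p.2 * ω p := by
  filter_upwards [ae_restrict_mem measurableSet_upperHalf] with y hy
  exact mul_nonneg (le_of_lt hy) (hω0 y)

lemma integrableOn_sqrt_snd_mul {ω : ℝ × ℝ → ℝ} (hω0 : ∀ p, 0 ≤ ω p)
    (hω : IntegrableOn ω upperHalf)
    (hmom : IntegrableOn (fun p => p.2 * ω p) upperHalf) :
    IntegrableOn (fun p => √p.2 * ω p) upperHalf := by
  refine ((memLp_two_sqrt (ae_snd_mul_nonneg hω0) hmom).integrable_mul
    (memLp_two_sqrt (.of_forall hω0) hω)).congr ?_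
  filter_upwards [ae_restrict_mem measurableSet_upperHalf] with y hy
  exact (sqrt_snd_mul_eq hω0 hy).symm

lemma integral_sqrt_snd_mul_le {ω : ℝ × ℝ → ℝ} (hω0 : ∀ p, 0 ≤ ω p)
    (hω : IntegrableOn ω upperHalf)
    (hmom : IntegrableOn (fun p => p.2 * ω p) upperHalf) :
    ∫ p in upperHalf, √p.2 * ω p ≤
      √(∫ p in upperHalf, p.2 * ω p) * √(∫ p in upperHalf, ω p) := by
  have hmom0 := ae_snd_mul_nonneg hω0
  have h := integral_mul_le_sqrt_integral_sq_mul_sqrt_integral_sq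
    (.of_forall fun _ => sqrt_nonneg _) (.of_forall fun _ => sqrt_nonneg _)
    (memLp_two_sqrt hmom0 hmom) (memLp_two_sqrt (.of_forall hω0) hω)
  have e2 : ∫ p in upperHalf, √(p.2 * ω p) ^ 2 = ∫ p in upperHalf, p.2 * ω p :=
    integral_congr_ae <| by filter_upwards [hmom0] with y hy using sq_sqrt hy
  have e3 : ∫ p in upperHalf, √(ω p) ^ 2 = ∫ p in upperHalf, ω p :=
    integral_congr_ae <| .of_forall fun y => sq_sqrt (hω0 y)
  rw [setIntegral_congr_fun measurableSet_upperHalf fun y hy => sqrt_snd_mul_eq hω0 hy]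
  rwa [e2, e3] at h

lemma integral_nearKernel_mul_le {ω : ℝ × ℝ → ℝ} (hω0 : ∀ p, 0 ≤ ω p)
    (hω : MemLp ω 2 (volume.restrict upperHalf)) {ρ : ℝ} (hρ : 0 < ρ) (x : ℝ × ℝ) :
    ∫ y in upperHalf, nearKernel ρ (y - x) * ω y ≤
      4 * √ρ * √(∫ y in upperHalf, ω y ^ 2) := by
  have hK2 : Integrable (fun y => nearKernel ρ (y - x) ^ 2) :=
    (integrable_nearKernel_sq hρ).comp_sub_right x
  have hK2le : ∫ y in upperHalf, nearKernel ρ (y - x) ^ 2 ≤ 16 * ρ := by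
    refine (setIntegral_le_integral hK2 (.of_forall fun _ => sq_nonneg _)).trans_eq ?_
    rw [integral_sub_right_eq_self (fun z => nearKernel ρ z ^ 2) x, integral_nearKernel_sq hρ]
  calc ∫ y in upperHalf, nearKernel ρ (y - x) * ω y
      ≤ √(∫ y in upperHalf, nearKernel ρ (y - x) ^ 2) * √(∫ y in upperHalf, ω y ^ 2) :=
        integral_mul_le_sqrt_integral_sq_mul_sqrt_integral_sq
          (.of_forall fun y => nearKernel_nonneg ρ (y - x)) (.of_forall hω0)
          ((memLp_nearKernel_sub hρ x).restrict _) hω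
    _ ≤ √(16 * ρ) * √(∫ y in upperHalf, ω y ^ 2) := by gcongr
    _ = 4 * √ρ * √(∫ y in upperHalf, ω y ^ 2) := by
        rw [sqrt_mul' _ hρ.le, show (16 : ℝ) = 4 ^ 2 by norm_num, sqrt_sq (by norm_num)]

lemma integral_halfPlaneGreen_mul_le {ω : ℝ × ℝ → ℝ} (hω0 : ∀ p, 0 ≤ ω p)
    (hω : MemLp ω 2 (volume.restrict upperHalf))
    (hsq : IntegrableOn (fun p => √p.2 * ω p) upperHalf) {x : ℝ × ℝ} (hx : x ∈ upperHalf)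
    {ρ : ℝ} (hρ : 0 < ρ) :
    ∫ y in upperHalf, halfPlaneGreen x y * ω y ≤
      (√x.2 / ρ * (∫ y in upperHalf, √y.2 * ω y) +
        4 * ρ * √(∫ y in upperHalf, ω y ^ 2)) / π := by
  have hKω : IntegrableOn (fun y => nearKernel ρ (y - x) * ω y) upperHalf :=
    ((memLp_nearKernel_sub hρ x).restrict _).integrable_mul hω
  calc ∫ y in upperHalf, halfPlaneGreen x y * ω y
      ≤ ∫ y in upperHalf,
          (√x.2 / ρ * (√y.2 * ω y) + √ρ * (nearKernel ρ (y - x) * ω y)) / π := by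
        refine integral_mono_of_nonneg ?_
          (((hsq.const_mul _).add (hKω.const_mul _)).div_const _) ?_
        · filter_upwards [ae_restrict_mem measurableSet_upperHalf] with y hy
          exact mul_nonneg (halfPlaneGreen_nonneg (le_of_lt hx) (le_of_lt hy)) (hω0 y)
        · filter_upwards [ae_restrict_mem measurableSet_upperHalf,
            ae_restrict_of_ae (ae_fst_ne_and_snd_ne x)] with y hy ⟨h1, h2⟩
          calc halfPlaneGreen x y * ω y
              ≤ (√x.2 * √y.2 / ρ + √ρ * nearKernel ρ (y - x)) / π * ω y :=
                mul_le_mul_of_nonneg_right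
                  (halfPlaneGreen_le (le_of_lt hx) (le_of_lt hy) h1 h2 hρ) (hω0 y)
            _ = _ := by ring
    _ = (√x.2 / ρ * (∫ y in upperHalf, √y.2 * ω y) +
          √ρ * ∫ y in upperHalf, nearKernel ρ (y - x) * ω y) / π := by
        rw [integral_div, integral_add (hsq.const_mul _) (hKω.const_mul _), integral_const_mul,
          integral_const_mul]
    _ ≤ (√x.2 / ρ * (∫ y in upperHalf, √y.2 * ω y) +
          √ρ * (4 * √ρ * √(∫ y in upperHalf, ω y ^ 2))) / π := by
        gcongr; exact integral_nearKernel_mul_le hω0 hω hρ x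
    _ = _ := by rw [← mul_assoc, ← mul_assoc, mul_comm _ 4, mul_assoc 4, mul_self_sqrt hρ.le]

lemma kineticEnergy_le {ω : ℝ × ℝ → ℝ} (hω0 : ∀ p, 0 ≤ ω p)
    (hω1 : IntegrableOn ω upperHalf) (hω : MemLp ω 2 (volume.restrict upperHalf))
    (hsq : IntegrableOn (fun p => √p.2 * ω p) upperHalf) {ρ : ℝ} (hρ : 0 < ρ) :
    kineticEnergy ω ≤ ((∫ p in upperHalf, √p.2 * ω p) ^ 2 / ρ +
      4 * ρ * √(∫ p in upperHalf, ω p ^ 2) * ∫ p in upperHalf, ω p) / (2 * π) := by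
  set S := ∫ p in upperHalf, √p.2 * ω p
  set X := ∫ p in upperHalf, ω p ^ 2
  have hrw : kineticEnergy ω =
      (1 / 2) * ∫ x in upperHalf, ω x * ∫ y in upperHalf, halfPlaneGreen x y * ω y := by
    simp only [kineticEnergy, ← integral_const_mul]
    congr 1; ext x; congr 1; ext y; ring
  calc kineticEnergy ω
      ≤ (1 / 2) * ∫ x in upperHalf,
          (S / (ρ * π) * (√x.2 * ω x) + 4 * ρ * √X / π * ω x) := by
        rw [hrw]
        refine mul_le_mul_of_nonneg_left (integral_mono_of_nonneg ?_
          ((hsq.const_mul _).add (hω1.const_mul _)) ?_) (by norm_num)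
        · filter_upwards [ae_restrict_mem measurableSet_upperHalf] with x hx
          refine mul_nonneg (hω0 x) (setIntegral_nonneg measurableSet_upperHalf fun y hy => ?_)
          exact mul_nonneg (halfPlaneGreen_nonneg (le_of_lt hx) (le_of_lt hy)) (hω0 y)
        · filter_upwards [ae_restrict_mem measurableSet_upperHalf] with x hx
          calc ω x * ∫ y in upperHalf, halfPlaneGreen x y * ω y
              ≤ ω x * ((√x.2 / ρ * S + 4 * ρ * √X) / π) := by
                gcongr
                · exact hω0 x
                · exact integral_halfPlaneGreen_mul_le hω0 hω hsq hx hρ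
            _ = _ := by field_simp
    _ = _ := by
        rw [integral_add (hsq.const_mul _) (hω1.const_mul _), integral_const_mul,
          integral_const_mul]
        field_simp
        ring

lemma integral_pos_of_integral_snd_mul_ne_zero {ω : ℝ × ℝ → ℝ} (hω0 : ∀ p, 0 ≤ ω p)
    (hω : IntegrableOn ω upperHalf) (hA : ∫ p in upperHalf, p.2 * ω p ≠ 0) :
    0 < ∫ p in upperHalf, ω p := by
  refine (setIntegral_nonneg measurableSet_upperHalf fun p _ => hω0 p).lt_of_ne fun hM => hA ?_
  have hzero := (integral_eq_zero_iff_of_nonneg hω0 hω).1 hM.symm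
  exact integral_eq_zero_of_ae <| by filter_upwards [hzero] with p hp; simp [hp]

lemma le_rpow_mul_rpow_add_of_forall_radius {E A M s : ℝ} (hA : 0 < A) (hM : 0 < M) (hs : 0 ≤ s)
    (hE : ∀ ρ > 0, E ≤ (A * M / ρ + 4 * ρ * s * M) / (2 * π)) :
    E ≤ A ^ ((2 : ℝ) / 3) * M ^ ((4 : ℝ) / 3) + s ^ 2 / 4 := by
  obtain ⟨a, ha, rfl⟩ : ∃ a > 0, A = a ^ 3 := ⟨A ^ (1 / 3 : ℝ), by positivity, by
    rw [← rpow_natCast, ← rpow_mul hA.le]; norm_num⟩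
  obtain ⟨m, hm, rfl⟩ : ∃ m > 0, M = m ^ 3 := ⟨M ^ (1 / 3 : ℝ), by positivity, by
    rw [← rpow_natCast, ← rpow_mul hM.le]; norm_num⟩
  have hpow : (a ^ 3) ^ ((2 : ℝ) / 3) * (m ^ 3) ^ ((4 : ℝ) / 3) = a ^ 2 * m ^ 4 := by
    rw [← rpow_natCast, ← rpow_mul ha.le, ← rpow_natCast m, ← rpow_mul hm.le]
    norm_num
  have h := hE (a / (2 * m)) (by positivity)
  have hρ : (a ^ 3 * m ^ 3 / (a / (2 * m)) + 4 * (a / (2 * m)) * s * m ^ 3) =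
      2 * (a ^ 2 * m ^ 4 + a * m ^ 2 * s) := by field_simp; ring
  rw [hρ, mul_div_mul_left _ _ two_ne_zero] at h
  calc E ≤ (a ^ 2 * m ^ 4 + a * m ^ 2 * s) / π := h
    _ ≤ (a ^ 2 * m ^ 4 + a * m ^ 2 * s) / 3 := by gcongr; exact pi_gt_three.le
    _ ≤ a ^ 2 * m ^ 4 + s ^ 2 / 4 := by nlinarith [sq_nonneg (a * m ^ 2 - s / 2)]
    _ = (a ^ 3) ^ ((2 : ℝ) / 3) * (m ^ 3) ^ ((4 : ℝ) / 3) + s ^ 2 / 4 := by rw [hpow]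

lemma kineticEnergy_le_of_memK {μ : ℝ} (hμ : 0 < μ) {ω : ℝ × ℝ → ℝ}
    (hK : memK μ ω) :
    kineticEnergy ω ≤ (∫ p in upperHalf, p.2 * ω p) ^ ((2 : ℝ) / 3) *
      (∫ p in upperHalf, ω p) ^ ((4 : ℝ) / 3) + (∫ p in upperHalf, ω p ^ 2) / 4 := by
  obtain ⟨hω0, hω1, hω2, hmom, hAμ, -⟩ := hK
  have hA : 0 < ∫ p in upperHalf, p.2 * ω p := hAμ ▸ hμ
  have hM := integral_pos_of_integral_snd_mul_ne_zero hω0 hω1 hA.ne'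
  have hX : 0 ≤ ∫ p in upperHalf, ω p ^ 2 := integral_nonneg fun p => sq_nonneg _
  have hS0 : 0 ≤ ∫ p in upperHalf, √p.2 * ω p :=
    setIntegral_nonneg measurableSet_upperHalf fun p _ => mul_nonneg (sqrt_nonneg _) (hω0 p)
  have hS2 : (∫ p in upperHalf, √p.2 * ω p) ^ 2 ≤
      (∫ p in upperHalf, p.2 * ω p) * ∫ p in upperHalf, ω p := by
    calc _ ≤ (√(∫ p in upperHalf, p.2 * ω p) * √(∫ p in upperHalf, ω p)) ^ 2 := by
          gcongr; exact integral_sqrt_snd_mul_le hω0 hω1 hmom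
      _ = _ := by rw [mul_pow, sq_sqrt hA.le, sq_sqrt hM.le]
  rw [← sq_sqrt hX]
  refine le_rpow_mul_rpow_add_of_forall_radius hA hM (sqrt_nonneg _) fun ρ hρ => ?_
  refine (kineticEnergy_le hω0 hω1 hω2 (integrableOn_sqrt_snd_mul hω0 hω1 hmom) hρ).trans ?_
  gcongr

lemma integral_sq_le_of_memK {μ : ℝ} (hμ : 0 < μ) {ω : ℝ × ℝ → ℝ} (hK : memK μ ω) :
    (∫ p in upperHalf, (ω p) ^ 2) ≤
      4 * ((∫ p in upperHalf, p.2 * ω p) ^ ((2 : ℝ) / 3) *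
        (∫ p in upperHalf, ω p) ^ ((4 : ℝ) / 3) - E₂ ω) := by
  have := kineticEnergy_le_of_memK hμ hK
  rw [E₂]
  linarith

lemma sqrt_integral_sq_le_of_memK {μ : ℝ} (hμ : 0 < μ) {ω : ℝ × ℝ → ℝ}
    (hK : memK μ ω) (hE : 0 < E₂ ω) :
    √(∫ p in upperHalf, (ω p) ^ 2) ≤ 2 * μ ^ ((1 : ℝ) / 3) := by
  have hX := integral_sq_le_of_memK hμ hK
  obtain ⟨hω0, -, -, -, hA, hM1⟩ := hK
  have hM : (∫ p in upperHalf, ω p) ^ ((4 : ℝ) / 3) ≤ 1 :=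
    rpow_le_one (integral_nonneg hω0) hM1 (by norm_num)
  rw [hA] at hX
  have hX' : ∫ p in upperHalf, (ω p) ^ 2 ≤ (2 * μ ^ ((1 : ℝ) / 3)) ^ 2 := by
    rw [mul_pow, ← rpow_natCast (μ ^ _), ← rpow_mul hμ.le]
    norm_num
    nlinarith [rpow_nonneg hμ.le ((2 : ℝ) / 3)]
  exact (sqrt_le_left (by positivity)).2 hX'

/-- Uniform `L²` bound for elements of `K_μ` and for minimizing sequences:
`‖ω‖₂² ≤ C(‖x₂ω‖₁^{2/3}‖ω‖₁^{4/3} − E₂[ω])`, and any minimizing sequence satisfies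
`limsup ‖ω_n‖₂ ≤ C μ^{1/3}`. -/
theorem minimizing_sequence_L2_bound :
    ∃ C > 0,
      (∀ μ : ℝ, 0 < μ → ∀ ω : ℝ × ℝ → ℝ, memK μ ω →
        (∫ p in upperHalf, (ω p) ^ 2) ≤
          C * ((∫ p in upperHalf, p.2 * ω p) ^ ((2 : ℝ) / 3) *
                (∫ p in upperHalf, ω p) ^ ((4 : ℝ) / 3) - E₂ ω)) ∧
      (∀ μ : ℝ, 0 < μ → ∀ (ω : ℕ → ℝ × ℝ → ℝ) (μs : ℕ → ℝ),
        (∀ n, memK (μs n) (ω n)) →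
        Filter.Tendsto μs Filter.atTop (nhds μ) →
        Filter.Tendsto (fun n => -E₂ (ω n)) Filter.atTop (nhds (sInf (negEnergyValues μ))) →
        sInf (negEnergyValues μ) < 0 →
        Filter.limsup (fun n => Real.sqrt (∫ p in upperHalf, (ω n p) ^ 2)) Filter.atTop ≤
          C * μ ^ ((1 : ℝ) / 3)) := by
  refine ⟨4, by norm_num, fun μ hμ ω hK => integral_sq_le_of_memK hμ hK, ?_⟩
  intro μ hμ ω μs hK hμs hE hI
  have hbound :
      ∀ᶠ n in atTop, √(∫ p in upperHalf, (ω n p) ^ 2) ≤ 2 * μs n ^ ((1 : ℝ) / 3) := by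
    filter_upwards [hμs.eventually_const_lt hμ, hE.eventually_lt_const hI] with n hn hEn
    exact sqrt_integral_sq_le_of_memK hn (hK n) (neg_neg_iff_pos.1 hEn)
  have hlim :
      Tendsto (fun n => 2 * μs n ^ ((1 : ℝ) / 3)) atTop (𝓝 (2 * μ ^ ((1 : ℝ) / 3))) :=
    (hμs.rpow_const (Or.inr (by norm_num))).const_mul 2
  calc limsup (fun n => √(∫ p in upperHalf, (ω n p) ^ 2)) atTop
      ≤ 2 * μ ^ ((1 : ℝ) / 3) := hlim.limsup_eq ▸ limsup_le_limsup hbound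
        (isCoboundedUnder_le_of_le atTop fun _ => sqrt_nonneg _) hlim.isBoundedUnder_le
    _ ≤ 4 * μ ^ ((1 : ℝ) / 3) := by gcongr; norm_num
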